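/- arXiv:2101.08563 — 8 statements merged into one kernel-verified Lean document; each statement's English description precedes it below -/
import Mathlib

section
/- Let M and N be positive integers with M < N, and let a_1, …, a_N ∈ ℂ^M be nonzero vectors. If the rank-one matrices a_1a_1ᴴ, …, a_Na_Nᴴ are jointly diagonalizable, then there exist distinct indices n and n′ and a nonzero scalar c ∈ ℂ such that a_n = c · a_{n′}. -/
/-!
Conjugating `a aᴴ` by `W` gives `b bᴴ` with `b = Wᴴ a`, and `b bᴴ` is diagonal only when `b` has
a single nonzero coordinate. With `W` invertible, `N > M` nonzero vectors `b_n` cannot occupy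
distinct coordinates, so two of them live on the same axis and are proportional; pulling back
through `Wᴴ` gives proportional `a_n`.
-/

open Matrix

lemma conjTranspose_mul_vecMulVec_star_mul {m α : Type*} [Fintype m] [CommSemiring α]
    [StarRing α] (W : Matrix m m α) (u : m → α) :
    Wᴴ * vecMulVec u (star u) * W = vecMulVec (Wᴴ *ᵥ u) (star (Wᴴ *ᵥ u)) := by
  rw [mul_vecMulVec, vecMulVec_mul, star_mulVec, conjTranspose_conjTranspose]

lemma eq_single_of_isDiag_vecMulVec_star {n K : Type*} [DecidableEq n] [Semiring K] [StarRing K]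
    [NoZeroDivisors K] {b : n → K} {i : n} (hi : b i ≠ 0) (h : (vecMulVec b (star b)).IsDiag) :
    b = Pi.single i (b i) := by
  funext j
  by_cases hji : j = i
  · subst hji
    simp
  · have hprod : b j * star (b i) = 0 := h hji
    rw [Pi.single_eq_of_ne hji]
    exact (mul_eq_zero.1 hprod).resolve_right (star_ne_zero.2 hi)

lemma exists_ne_smul_of_isDiag_vecMulVec_star {ι n K : Type*} [Fintype ι] [Fintype n] [Field K]
    [StarRing K] (b : ι → n → K) (hb : ∀ k, b k ≠ 0)
    (hdiag : ∀ k, (vecMulVec (b k) (star (b k))).IsDiag) (hcard : Fintype.card n < Fintype.card ι) :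
    ∃ k k', k ≠ k' ∧ ∃ c : K, c ≠ 0 ∧ b k = c • b k' := by
  classical
  choose f hf using fun k => Function.ne_iff.1 (hb k)
  obtain ⟨k, k', hkk', hf_eq⟩ := Fintype.exists_ne_map_eq_of_card_lt f hcard
  have hk' : b k' (f k) ≠ 0 := hf_eq ▸ hf k'
  refine ⟨k, k', hkk', b k (f k) / b k' (f k), div_ne_zero (hf k) hk', ?_⟩
  calc b k = Pi.single (f k) (b k (f k)) := eq_single_of_isDiag_vecMulVec_star (hf k) (hdiag k)
    _ = (b k (f k) / b k' (f k)) • Pi.single (f k) (b k' (f k)) := by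
      rw [← Pi.single_smul', smul_eq_mul, div_mul_cancel₀ _ hk']
    _ = (b k (f k) / b k' (f k)) • b k' := by
      rw [← eq_single_of_isDiag_vecMulVec_star hk' (hdiag k')]

theorem stmt_0_general (M N : ℕ) (hMN : M < N)
    (a : Fin N → (Fin M → ℂ)) (ha : ∀ n, a n ≠ 0)
    (hJD : ∃ W : Matrix (Fin M) (Fin M) ℂ, IsUnit W ∧
      ∀ n, (Wᴴ * Matrix.vecMulVec (a n) (star (a n)) * W).IsDiag) :
    ∃ n n' : Fin N, n ≠ n' ∧ ∃ c : ℂ, c ≠ 0 ∧ a n = c • a n' := by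
  obtain ⟨W, hW, hdiag⟩ := hJD
  have hinj : Function.Injective Wᴴ.mulVec :=
    mulVec_injective_iff_isUnit.2 ((isUnit_conjTranspose W).2 hW)
  obtain ⟨n, n', hnn', c, hc, hbc⟩ := exists_ne_smul_of_isDiag_vecMulVec_star
    (fun n => Wᴴ *ᵥ a n)
    (fun n h => ha n (hinj (h.trans (mulVec_zero _).symm)))
    (fun n => conjTranspose_mul_vecMulVec_star_mul W (a n) ▸ hdiag n)
    (by simpa using hMN)
  exact ⟨n, n', hnn', c, hc, hinj (by rw [mulVec_smul]; exact hbc)⟩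

theorem stmt_0 (M N : ℕ) (hM : 0 < M) (hMN : M < N)
    (a : Fin N → (Fin M → ℂ)) (ha : ∀ n, a n ≠ 0)
    (hJD : ∃ W : Matrix (Fin M) (Fin M) ℂ, IsUnit W ∧
      ∀ n, (Wᴴ * Matrix.vecMulVec (a n) (star (a n)) * W).IsDiag) :
    ∃ n n' : Fin N, n ≠ n' ∧ ∃ c : ℂ, c ≠ 0 ∧ a n = c • a n' :=
  stmt_0_general M N hMN a ha hJD
end

section
/- Let M, N be positive integers, let Ω₁, …, Ω_N ∈ ℂ^{M×M} be Hermitian positive definite, and let Γ₁, …, Γ_N ∈ ℂ^{M×M} satisfy Σ_{n=1}^N Γ_n = I. Then Σ_{n=1}^N Γ_nᴴ Ω_n⁻¹ Γ_n ≥ (Σ_{n=1}^N Ω_n)⁻¹ in the Loewner order, with equality if and only if Γ_n = Ω_n (Σ_{ν=1}^N Ω_ν)⁻¹ for every n ∈ {1, …, N}. -/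
open Matrix ComplexOrder

/-!
Put `S = ∑ Ωₙ` and `Dₙ = Γₙ - Ωₙ S⁻¹`. Since `∑ Γₙ = 1`, the cross terms in the expansion of
`∑ Dₙᴴ Ωₙ⁻¹ Dₙ` collapse and `∑ Γₙᴴ Ωₙ⁻¹ Γₙ - S⁻¹ = ∑ Dₙᴴ Ωₙ⁻¹ Dₙ`. Each summand is positive
semidefinite, and a sum of positive semidefinite matrices vanishes only if every summand does;
as `Ωₙ⁻¹` is positive definite, `Dₙᴴ Ωₙ⁻¹ Dₙ = 0` forces `Dₙ = 0`.
-/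

namespace Matrix

section Algebra

variable {ι m R : Type*} [Fintype ι] [Fintype m] [DecidableEq m] [CommRing R] [StarRing R]

lemma conjTranspose_sub_mul_mul_inv_mul_sub_mul {Ω : Matrix m m R} (hΩ : Ω.IsHermitian)
    (hΩu : IsUnit Ω.det) (Γ T : Matrix m m R) :
    (Γ - Ω * T)ᴴ * Ω⁻¹ * (Γ - Ω * T) = Γᴴ * Ω⁻¹ * Γ - Γᴴ * T - Tᴴ * Γ + Tᴴ * Ω * T := by
  simp only [conjTranspose_sub, conjTranspose_mul, hΩ.eq, sub_mul, mul_sub, Matrix.mul_assoc,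
    nonsing_inv_mul_cancel_left _ _ hΩu, mul_nonsing_inv_cancel_left _ _ hΩu]
  abel

lemma sum_conjTranspose_mul_inv_mul_sub_inv_sum {Ω Γ : ι → Matrix m m R}
    (hΩ : ∀ i, (Ω i).IsHermitian) (hΩu : ∀ i, IsUnit (Ω i).det)
    (hS : IsUnit (∑ i, Ω i).det) (hΓ : ∑ i, Γ i = 1) :
    ∑ i, (Γ i)ᴴ * (Ω i)⁻¹ * Γ i - (∑ i, Ω i)⁻¹ =
      ∑ i, (Γ i - Ω i * (∑ j, Ω j)⁻¹)ᴴ * (Ω i)⁻¹ * (Γ i - Ω i * (∑ j, Ω j)⁻¹) := by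
  have hT : (∑ i, Ω i)⁻¹ᴴ = (∑ i, Ω i)⁻¹ := IsHermitian.inv (isSelfAdjoint_sum _ fun i _ => hΩ i)
  simp only [conjTranspose_sub_mul_mul_inv_mul_sub_mul (hΩ _) (hΩu _), Finset.sum_add_distrib,
    Finset.sum_sub_distrib, ← Finset.mul_sum, ← Finset.sum_mul, ← conjTranspose_sum, hΓ, hT]
  rw [nonsing_inv_mul _ hS, conjTranspose_one, Matrix.one_mul, Matrix.mul_one]
  abel

end Algebra

lemma PosDef.conjTranspose_mul_mul_same_eq_zero_iff {n m R : Type*} [Fintype n] [Fintype m]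
    [CommRing R] [PartialOrder R] [StarRing R] {A : Matrix n n R} (hA : A.PosDef)
    (B : Matrix n m R) : Bᴴ * A * B = 0 ↔ B = 0 := by
  refine ⟨fun h => ext_iff_mulVec.mpr fun x => ?_, fun h => by simp [h]⟩
  rw [zero_mulVec]
  by_contra hx
  have hpos : 0 < star x ⬝ᵥ ((Bᴴ * A * B) *ᵥ x) := by
    simpa only [star_mulVec, dotProduct_mulVec, vecMul_vecMul] using hA.dotProduct_mulVec_pos hx
  simp [h] at hpos

open scoped MatrixOrder in
lemma sum_eq_zero_iff_of_posSemidef {ι n 𝕜 : Type*} [RCLike 𝕜] {s : Finset ι}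
    {A : ι → Matrix n n 𝕜} (hA : ∀ i ∈ s, (A i).PosSemidef) :
    ∑ i ∈ s, A i = 0 ↔ ∀ i ∈ s, A i = 0 :=
  Finset.sum_eq_zero_iff_of_nonneg fun i hi => (hA i hi).nonneg

end Matrix

theorem stmt_2_general (M N : ℕ) (hN : 0 < N)
    (Ω : Fin N → Matrix (Fin M) (Fin M) ℂ) (hΩ : ∀ n, (Ω n).PosDef)
    (Γ : Fin N → Matrix (Fin M) (Fin M) ℂ) (hΓ : ∑ n, Γ n = 1) :
    (∑ n, (Γ n)ᴴ * (Ω n)⁻¹ * Γ n - (∑ n, Ω n)⁻¹).PosSemidef ∧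
      (∑ n, (Γ n)ᴴ * (Ω n)⁻¹ * Γ n = (∑ n, Ω n)⁻¹ ↔
        ∀ n, Γ n = Ω n * (∑ ν, Ω ν)⁻¹) := by
  have hS : (∑ n, Ω n).PosDef := posDef_sum ⟨⟨0, hN⟩, Finset.mem_univ _⟩ fun n _ => hΩ n
  rw [← sub_eq_zero, sum_conjTranspose_mul_inv_mul_sub_inv_sum (fun n => (hΩ n).isHermitian)
    (fun n => (isUnit_iff_isUnit_det _).mp (hΩ n).isUnit)
    ((isUnit_iff_isUnit_det _).mp hS.isUnit) hΓ]
  refine ⟨posSemidef_sum _ fun n _ => (hΩ n).inv.posSemidef.conjTranspose_mul_mul_same _, ?_⟩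
  rw [sum_eq_zero_iff_of_posSemidef fun n _ => (hΩ n).inv.posSemidef.conjTranspose_mul_mul_same _]
  simp only [Finset.mem_univ, true_imp_iff, (hΩ _).inv.conjTranspose_mul_mul_same_eq_zero_iff,
    sub_eq_zero]

theorem stmt_2 (M N : ℕ) (hM : 0 < M) (hN : 0 < N)
    (Ω : Fin N → Matrix (Fin M) (Fin M) ℂ) (hΩ : ∀ n, (Ω n).PosDef)
    (Γ : Fin N → Matrix (Fin M) (Fin M) ℂ) (hΓ : ∑ n, Γ n = 1) :
    (∑ n, (Γ n)ᴴ * (Ω n)⁻¹ * Γ n - (∑ n, Ω n)⁻¹).PosSemidef ∧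
      (∑ n, (Γ n)ᴴ * (Ω n)⁻¹ * Γ n = (∑ n, Ω n)⁻¹ ↔
        ∀ n, Γ n = Ω n * (∑ ν, Ω ν)⁻¹) :=
  stmt_2_general M N hN Ω hΩ Γ hΓ
end

section
/- Let M, N be positive integers, let W ∈ ℂ^{M×M} be invertible, let Λ_1, …, Λ_N ∈ ℂ^{M×M} be diagonal matrices with positive real diagonal entries, and let h_1, …, h_N > 0 be reals. Define R_n := W^{−H} Λ_n W^{−1} and X := Σ_{ν=1}^N h_ν R_ν. Then X is invertible and the multichannel Wiener filter factorizes as h_n R_n X⁻¹ = W^{−H} D_n Wᴴ, where D_n is the diagonal matrix with m-th diagonal entry (h_n [Λ_n]_{mm}) / (Σ_{ν=1}^N h_ν [Λ_ν]_{mm}). -/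
open Matrix

theorem stmt_8 (M N : ℕ) (hM : 0 < M) (hN : 0 < N)
    (W : Matrix (Fin M) (Fin M) ℂ) (hW : IsUnit W)
    (lam : Fin N → Fin M → ℝ) (hlam : ∀ n m, 0 < lam n m)
    (h : Fin N → ℝ) (hh : ∀ n, 0 < h n)
    (R : Fin N → Matrix (Fin M) (Fin M) ℂ)
    (hR : ∀ n, R n = (Wᴴ)⁻¹ * Matrix.diagonal (fun m => (lam n m : ℂ)) * W⁻¹)
    (X : Matrix (Fin M) (Fin M) ℂ) (hX : X = ∑ ν, (h ν : ℂ) • R ν) :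
    IsUnit X ∧ ∀ n, (h n : ℂ) • R n * X⁻¹ =
      (Wᴴ)⁻¹ *
        Matrix.diagonal (fun m => ((h n * lam n m / ∑ ν, h ν * lam ν m : ℝ) : ℂ)) *
        Wᴴ := by
  set s : Fin M → ℂ := fun m => ((∑ ν, h ν * lam ν m : ℝ) : ℂ) with hs_def
  have hspos : ∀ m, (0 : ℝ) < ∑ ν, h ν * lam ν m := fun m =>
    Finset.sum_pos (fun ν _ => mul_pos (hh ν) (hlam ν m))
      (Finset.univ_nonempty_iff.mpr ⟨⟨0, hN⟩⟩)
  have hs : ∀ m, s m ≠ 0 := fun m => by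
    simp only [hs_def, ne_eq, Complex.ofReal_eq_zero]
    exact (hspos m).ne'
  have hWH : IsUnit Wᴴ := (Matrix.isUnit_conjTranspose W).mpr hW
  have hdet : IsUnit W.det := (Matrix.isUnit_iff_isUnit_det W).mp hW
  have hdetH : IsUnit Wᴴ.det := (Matrix.isUnit_iff_isUnit_det Wᴴ).mp hWH
  have hDS : IsUnit (Matrix.diagonal s) := by
    rw [Matrix.isUnit_iff_isUnit_det, Matrix.det_diagonal]
    exact isUnit_iff_ne_zero.mpr (Finset.prod_ne_zero_iff.mpr fun m _ => hs m)
  have hXeq : X = (Wᴴ)⁻¹ * Matrix.diagonal s * W⁻¹ := by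
    have step : X = (Wᴴ)⁻¹ * (∑ ν, (h ν : ℂ) • Matrix.diagonal (fun m => (lam ν m : ℂ))) * W⁻¹ := by
      rw [hX, Finset.mul_sum, Finset.sum_mul]
      refine Finset.sum_congr rfl fun ν _ => ?_
      rw [hR, Matrix.mul_smul, Matrix.smul_mul]
    rw [step]
    congr 1
    congr 1
    ext i j
    by_cases hij : i = j
    · subst hij
      simp [Matrix.sum_apply, Matrix.diagonal_apply_eq, hs_def, Finset.mul_sum]
    · simp [Matrix.sum_apply, Matrix.diagonal_apply_ne _ hij]
  have hXunit : IsUnit X := by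
    rw [hXeq]
    exact ((Matrix.isUnit_nonsing_inv_iff.mpr hWH).mul hDS).mul
      (Matrix.isUnit_nonsing_inv_iff.mpr hW)
  refine ⟨hXunit, fun n => ?_⟩
  have hdiaginv : (Matrix.diagonal s)⁻¹ = Matrix.diagonal fun m => (s m)⁻¹ := by
    apply Matrix.inv_eq_right_inv
    rw [Matrix.diagonal_mul_diagonal]
    convert Matrix.diagonal_one with m
    exact mul_inv_cancel₀ (hs m)
  have hXinv : X⁻¹ = W * Matrix.diagonal (fun m => (s m)⁻¹) * Wᴴ := by
    rw [hXeq, Matrix.mul_inv_rev, Matrix.mul_inv_rev,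
      Matrix.nonsing_inv_nonsing_inv _ hdet, Matrix.nonsing_inv_nonsing_inv _ hdetH,
      hdiaginv, mul_assoc]
  have key : Matrix.diagonal (fun m => (h n : ℂ) * (lam n m : ℂ)) *
      Matrix.diagonal (fun m => (s m)⁻¹) =
      Matrix.diagonal (fun m => ((h n * lam n m / ∑ ν, h ν * lam ν m : ℝ) : ℂ)) := by
    rw [Matrix.diagonal_mul_diagonal]
    ext i j
    rcases eq_or_ne i j with rfl | hij
    · simp only [Matrix.diagonal_apply_eq, hs_def]
      push_cast
      rw [div_eq_mul_inv]
    · simp [Matrix.diagonal_apply_ne _ hij]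
  have hsmul : (h n : ℂ) • R n =
      (Wᴴ)⁻¹ * Matrix.diagonal (fun m => (h n : ℂ) * (lam n m : ℂ)) * W⁻¹ := by
    rw [hR, ← Matrix.smul_mul, ← Matrix.mul_smul, ← Matrix.diagonal_smul]
    rfl
  rw [hsmul, hXinv]
  rw [Matrix.mul_assoc ((Wᴴ)⁻¹ * _) W⁻¹, Matrix.mul_assoc W _ Wᴴ,
    ← Matrix.mul_assoc W⁻¹ W, Matrix.nonsing_inv_mul W hdet, Matrix.one_mul,
    ← Matrix.mul_assoc, Matrix.mul_assoc (Wᴴ)⁻¹, key]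
end

section
/- Let M be a positive integer, let W ∈ ℂ^{M×M} be invertible, and let h_1, …, h_M > 0 be reals. Define R_n := W^{−H} e_n e_nᵀ W^{−1} for n ∈ {1, …, M} and X := Σ_{ν=1}^M h_ν R_ν. Then X is invertible and, for every n, the multichannel Wiener filter satisfies h_n R_n X⁻¹ = W^{−H} e_n e_nᵀ Wᴴ; in particular it does not depend on h_1, …, h_M. -/
/-!
The weighted sum is `X = W⁻ᴴ * diagonal h * W⁻¹`, a product of invertible matrices, so
`X⁻¹ = W * (diagonal h)⁻¹ * Wᴴ`. In `h n • R n * X⁻¹` the factor `W⁻¹ * W` cancels and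
`h n • e_n e_nᵀ * (diagonal h)⁻¹ = e_n e_nᵀ`, because `e_n e_nᵀ * diagonal h = h n • e_n e_nᵀ`.
-/

open Matrix

namespace Matrix

variable {n α : Type*} [Fintype n] [DecidableEq n]

lemma single_mul_diagonal [NonUnitalNonAssocSemiring α] (i j : n) (a : α) (d : n → α) :
    single i j a * diagonal d = single i j (a * d j) := by
  ext k l
  by_cases hjl : j = l
  · subst hjl; simp [single_apply, mul_diagonal]
  · simp [mul_diagonal, hjl]

lemma sum_smul_mul_single_mul [CommSemiring α] (P Q : Matrix n n α) (d : n → α) :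
    ∑ ν, d ν • (P * single ν ν 1 * Q) = P * diagonal d * Q := by
  rw [← sum_single_eq_diagonal, Matrix.mul_sum, Matrix.sum_mul]
  refine Finset.sum_congr rfl fun ν _ => ?_
  rw [← Matrix.smul_mul, ← Matrix.mul_smul, smul_single, smul_eq_mul, mul_one]

variable [CommRing α] {P Q : Matrix n n α} {d : n → α}

lemma smul_mul_single_mul_mul_inv (hQ : IsUnit Q) (hd : IsUnit d) (i : n) :
    d i • (P * single i i 1 * Q) * (P * diagonal d * Q)⁻¹ = P * single i i 1 * P⁻¹ := by
  have hQ' : IsUnit Q.det := (isUnit_iff_isUnit_det Q).mp hQ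
  have hD : IsUnit (diagonal d).det := (isUnit_iff_isUnit_det _).mp (isUnit_diagonal.mpr hd)
  have hsingle : d i • single i i (1 : α) = single i i 1 * diagonal d := by
    rw [single_mul_diagonal, smul_single, smul_eq_mul, mul_one, one_mul]
  calc d i • (P * single i i 1 * Q) * (P * diagonal d * Q)⁻¹
      = P * (d i • single i i 1) * (Q * Q⁻¹) * (diagonal d)⁻¹ * P⁻¹ := by
        simp only [mul_inv_rev, mul_smul_comm, smul_mul_assoc, Matrix.mul_assoc]
    _ = P * single i i 1 * P⁻¹ := by
        rw [mul_nonsing_inv Q hQ', Matrix.mul_one, hsingle, ← Matrix.mul_assoc P,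
          mul_nonsing_inv_cancel_right _ _ hD]

end Matrix

theorem stmt_9_general (M : ℕ)
    (W : Matrix (Fin M) (Fin M) ℂ) (hW : IsUnit W)
    (h : Fin M → ℝ) (hh : ∀ n, 0 < h n)
    (R : Fin M → Matrix (Fin M) (Fin M) ℂ)
    (hR : ∀ n, R n = (Wᴴ)⁻¹ * Matrix.single n n (1 : ℂ) * W⁻¹)
    (X : Matrix (Fin M) (Fin M) ℂ) (hX : X = ∑ ν, (h ν : ℂ) • R ν) :
    IsUnit X ∧ ∀ n, (h n : ℂ) • R n * X⁻¹ =
      (Wᴴ)⁻¹ * Matrix.single n n (1 : ℂ) * Wᴴ := by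
  have hd : IsUnit fun ν => (h ν : ℂ) :=
    Pi.isUnit_iff.mpr fun ν => Ne.isUnit (Complex.ofReal_ne_zero.mpr (hh ν).ne')
  have hWH : IsUnit Wᴴ := (isUnit_conjTranspose W).mpr hW
  have hXeq : X = (Wᴴ)⁻¹ * diagonal (fun ν => (h ν : ℂ)) * W⁻¹ := by
    simp only [hX, hR, sum_smul_mul_single_mul]
  refine ⟨?_, fun n => ?_⟩
  · rw [hXeq]
    exact ((isUnit_nonsing_inv_iff.mpr hWH).mul
      (isUnit_diagonal.mpr hd)).mul (isUnit_nonsing_inv_iff.mpr hW)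
  · rw [hR, hXeq, smul_mul_single_mul_mul_inv (isUnit_nonsing_inv_iff.mpr hW) hd,
      nonsing_inv_nonsing_inv _ ((isUnit_iff_isUnit_det _).mp hWH)]

theorem stmt_9 (M : ℕ) (hM : 0 < M)
    (W : Matrix (Fin M) (Fin M) ℂ) (hW : IsUnit W)
    (h : Fin M → ℝ) (hh : ∀ n, 0 < h n)
    (R : Fin M → Matrix (Fin M) (Fin M) ℂ)
    (hR : ∀ n, R n = (Wᴴ)⁻¹ * Matrix.single n n (1 : ℂ) * W⁻¹)
    (X : Matrix (Fin M) (Fin M) ℂ) (hX : X = ∑ ν, (h ν : ℂ) • R ν) :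
    IsUnit X ∧ ∀ n, (h n : ℂ) • R n * X⁻¹ =
      (Wᴴ)⁻¹ * Matrix.single n n (1 : ℂ) * Wᴴ :=
  stmt_9_general M W hW h hh R hR X hX
end

section
/- Let M be a positive integer and let Ω₁, Ω₂ ∈ ℂ^{M×M} be Hermitian positive definite. Then there is exactly one Hermitian positive definite matrix X ∈ ℂ^{M×M} satisfying the algebraic Riccati equation X Ω₁⁻¹ X = Ω₂; that is, if X and Y are both Hermitian positive definite with X Ω₁⁻¹ X = Ω₂ and Y Ω₁⁻¹ Y = Ω₂, then X = Y. -/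
/-!
With `S = √A` for the positive definite `A = Ω₁⁻¹`, the Riccati equation `X A X = Ω₂` says
`(S X S)² = S Ω₂ S`. Since `S X S` is positive semidefinite, it is the unique positive square root
of `S Ω₂ S`, and `S` is invertible, so `X` is determined by `Ω₁` and `Ω₂`.
-/

open Matrix ComplexOrder
open scoped MatrixOrder

namespace Matrix

variable {n 𝕜 : Type*} [Fintype n] [DecidableEq n] [RCLike 𝕜]

theorem PosSemidef.eq_of_mul_mul_eq_mul_mul {A X Y : Matrix n n 𝕜} (hA : A.PosDef)
    (hX : X.PosSemidef) (hY : Y.PosSemidef) (h : X * A * X = Y * A * Y) : X = Y := by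
  set S := CFC.sqrt A
  have hSS : S * S = A := CFC.sqrt_mul_sqrt_self A hA.posSemidef.nonneg
  have hS : S.IsHermitian := (CFC.sqrt_nonneg A).posSemidef.isHermitian
  have hSunit : IsUnit S := isUnit_of_mul_isUnit_left (hSS ▸ hA.isUnit)
  have congr_nonneg : ∀ {Z : Matrix n n 𝕜}, Z.PosSemidef → 0 ≤ S * Z * S := fun hZ => by
    simpa only [hS.eq] using (hZ.mul_mul_conjTranspose_same S).nonneg
  have hsq : S * X * S * (S * X * S) = S * Y * S * (S * Y * S) :=
    calc S * X * S * (S * X * S) = S * (X * (S * S) * X) * S := by noncomm_ring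
      _ = S * (Y * (S * S) * Y) * S := by rw [hSS, h]
      _ = S * Y * S * (S * Y * S) := by noncomm_ring
  have hconj : S * X * S = S * Y * S :=
    (CFC.mul_self_eq_mul_self_iff _ _ (congr_nonneg hX) (congr_nonneg hY)).1 hsq
  exact hSunit.mul_left_cancel (hSunit.mul_right_cancel hconj)

end Matrix

theorem stmt_13_general (M : ℕ)
    (Ω₁ Ω₂ : Matrix (Fin M) (Fin M) ℂ) (h₁ : Ω₁.PosDef)
    (X Y : Matrix (Fin M) (Fin M) ℂ) (hX : X.PosDef) (hY : Y.PosDef)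
    (hXr : X * Ω₁⁻¹ * X = Ω₂) (hYr : Y * Ω₁⁻¹ * Y = Ω₂) :
    X = Y :=
  hX.posSemidef.eq_of_mul_mul_eq_mul_mul h₁.inv hY.posSemidef (hXr.trans hYr.symm)

theorem stmt_13 (M : ℕ) (hM : 0 < M)
    (Ω₁ Ω₂ : Matrix (Fin M) (Fin M) ℂ) (h₁ : Ω₁.PosDef) (h₂ : Ω₂.PosDef)
    (X Y : Matrix (Fin M) (Fin M) ℂ) (hX : X.PosDef) (hY : Y.PosDef)
    (hXr : X * Ω₁⁻¹ * X = Ω₂) (hYr : Y * Ω₁⁻¹ * Y = Ω₂) :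
    X = Y :=
  stmt_13_general M Ω₁ Ω₂ h₁ X Y hX hY hXr hYr
end

section
/- Let M, J be positive integers, let W ∈ ℂ^{M×M} be invertible with columns w_1, …, w_M, let X̂_1, …, X̂_J ∈ ℂ^{M×M} be Hermitian positive definite, and let σ_{mj} > 0 be reals for m ∈ {1,…,M}, j ∈ {1,…,J}. Set u_{mj} := w_mᴴ X̂_j w_m, which is a positive real number. Then the FastFCA cost decomposes exactly into an approximate-joint-diagonalization term plus an Itakura–Saito NMF term: −J ln|det W|² + Σ_{m,j} u_{mj}/σ_{mj}² + Σ_{m,j} ln σ_{mj}² = Σ_{j=1}^J D_LD(Wᴴ X̂_j W ∣ ddiag(Wᴴ X̂_j W)) + Σ_{m,j} D_IS(u_{mj} ∣ σ_{mj}²) + Σ_{j=1}^J ln det X̂_j + M·J. -/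
/-!
For each `j`, `Ω := Wᴴ X̂ⱼ W` is positive definite with diagonal `u_{·j}`. Since the diagonal of
`Ω · ddiag(Ω)⁻¹` is all ones, `D_LD(Ω ∣ ddiag Ω) = Σₘ ln Ωₘₘ − ln det Ω`, and
`det Ω = |det W|² det X̂ⱼ`. Expanding `D_IS(u ∣ σ²) = u/σ² − ln u + ln σ² − 1`, the `ln u` terms
of the two divergences cancel and what remains is the left-hand side.
-/

open Matrix ComplexOrder

/-- The diagonal part of a square matrix (off-diagonal entries nullified). -/
def ddiag {M : ℕ} (A : Matrix (Fin M) (Fin M) ℂ) : Matrix (Fin M) (Fin M) ℂ :=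
  Matrix.diagonal (fun m => A m m)

/-- The log-determinant divergence of two (Hermitian positive definite) matrices. -/
noncomputable def DLD {M : ℕ} (Ω₁ Ω₂ : Matrix (Fin M) (Fin M) ℂ) : ℝ :=
  ((Ω₁ * Ω₂⁻¹).trace).re - Real.log ((Ω₁ * Ω₂⁻¹).det.re) - M

/-- The Itakura–Saito divergence of two positive reals. -/
noncomputable def DIS (a b : ℝ) : ℝ := a / b - Real.log (a / b) - 1

theorem Complex.ofReal_re_of_pos {z : ℂ} (hz : 0 < z) : ((z.re : ℝ) : ℂ) = z :=
  (Complex.eq_re_of_ofReal_le (r := 0) (by simpa using hz.le)).symm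

namespace Matrix

theorem conjTranspose_mul_mul_apply_self {α m n : Type*} [NonUnitalSemiring α] [Star α]
    [Fintype n] (W : Matrix n m α) (X : Matrix n n α) (i : m) :
    (Wᴴ * X * W) i i = star (fun k => W k i) ⬝ᵥ X *ᵥ (fun k => W k i) := by
  simp only [mul_apply, conjTranspose_apply, dotProduct, mulVec, Finset.sum_mul, Finset.mul_sum,
    Pi.star_apply, mul_assoc]
  exact Finset.sum_comm

theorem det_conjTranspose_mul_mul {n : Type*} [Fintype n] [DecidableEq n]
    (W X : Matrix n n ℂ) : (Wᴴ * X * W).det = ((‖W.det‖ ^ 2 : ℝ) : ℂ) * X.det := by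
  rw [det_mul, det_mul, det_conjTranspose, Complex.star_def, mul_right_comm, Complex.conj_mul']
  push_cast
  ring

variable {M : ℕ} {Ω : Matrix (Fin M) (Fin M) ℂ}

theorem inv_ddiag (hΩ : ∀ m, Ω m m ≠ 0) : (ddiag Ω)⁻¹ = diagonal fun m => (Ω m m)⁻¹ :=
  inv_eq_right_inv <| by
    rw [ddiag, diagonal_mul_diagonal, ← diagonal_one]
    exact congrArg diagonal (funext fun m => mul_inv_cancel₀ (hΩ m))

theorem trace_mul_inv_ddiag (hΩ : ∀ m, Ω m m ≠ 0) : (Ω * (ddiag Ω)⁻¹).trace = M := by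
  simp [inv_ddiag hΩ, trace, mul_diagonal, hΩ]

theorem det_mul_inv_ddiag (hΩ : ∀ m, Ω m m ≠ 0) :
    (Ω * (ddiag Ω)⁻¹).det = Ω.det / ∏ m, Ω m m := by
  rw [det_mul, inv_ddiag hΩ, det_diagonal, Finset.prod_inv_distrib, div_eq_mul_inv]

theorem DLD_ddiag_of_posDef (hΩ : Ω.PosDef) :
    DLD Ω (ddiag Ω) = ∑ m, Real.log (Ω m m).re - Real.log Ω.det.re := by
  have hdiag : ∀ m, 0 < Ω m m := fun m => hΩ.diag_pos
  have hdet : 0 < Ω.det := hΩ.det_pos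
  have hdiag_re : ∀ m, 0 < (Ω m m).re := fun m => (Complex.pos_iff.mp (hdiag m)).1
  have hdet_re : 0 < Ω.det.re := (Complex.pos_iff.mp hdet).1
  have hreal : Ω.det / ∏ m, Ω m m = ((Ω.det.re / ∏ m, (Ω m m).re : ℝ) : ℂ) := by
    push_cast
    simp only [Complex.ofReal_re_of_pos hdet, Complex.ofReal_re_of_pos (hdiag _)]
  rw [DLD, trace_mul_inv_ddiag fun m => (hdiag m).ne', det_mul_inv_ddiag fun m => (hdiag m).ne',
    hreal, Complex.ofReal_re, Real.log_div hdet_re.ne' (Finset.prod_pos fun m _ => hdiag_re m).ne',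
    Real.log_prod fun m _ => (hdiag_re m).ne', Complex.natCast_re]
  ring

end Matrix

theorem DIS_eq_sub_log {a b : ℝ} (ha : a ≠ 0) (hb : b ≠ 0) :
    DIS a b = a / b - Real.log a + Real.log b - 1 := by
  rw [DIS, Real.log_div ha hb]
  ring

theorem stmt_15_general (M J : ℕ)
    (W : Matrix (Fin M) (Fin M) ℂ) (hW : IsUnit W)
    (Xhat : Fin J → Matrix (Fin M) (Fin M) ℂ) (hXhat : ∀ j, (Xhat j).PosDef)
    (σ : Fin M → Fin J → ℝ) (hσ : ∀ m j, 0 < σ m j)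
    (u : Fin M → Fin J → ℂ)
    (hu : ∀ m j, u m j =
      star (fun k => W k m) ⬝ᵥ (Xhat j).mulVec (fun k => W k m)) :
    (∀ m j, (u m j).im = 0 ∧ 0 < (u m j).re) ∧
    -(J : ℝ) * Real.log (‖W.det‖ ^ 2)
        + (∑ m, ∑ j, (u m j).re / (σ m j) ^ 2)
        + (∑ m, ∑ j, Real.log ((σ m j) ^ 2)) =
      (∑ j, DLD (Wᴴ * Xhat j * W) (ddiag (Wᴴ * Xhat j * W)))
        + (∑ m, ∑ j, DIS ((u m j).re) ((σ m j) ^ 2))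
        + (∑ j, Real.log ((Xhat j).det.re)) + M * J := by
  have hΩ : ∀ j, (Wᴴ * Xhat j * W).PosDef := fun j =>
    (hXhat j).conjTranspose_mul_mul_same (mulVec_injective_iff_isUnit.mpr hW)
  have hΩ_diag : ∀ m j, (Wᴴ * Xhat j * W) m m = u m j := fun m j => by
    rw [hu, conjTranspose_mul_mul_apply_self]
  have hu_pos : ∀ m j, 0 < (u m j).re ∧ 0 = (u m j).im := fun m j =>
    Complex.pos_iff.mp (hΩ_diag m j ▸ (hΩ j).diag_pos)
  refine ⟨fun m j => ⟨(hu_pos m j).2.symm, (hu_pos m j).1⟩, ?_⟩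
  have hnormW : 0 < ‖W.det‖ ^ 2 := by
    have := (isUnit_iff_isUnit_det W).mp hW |>.ne_zero
    positivity
  have hDLD : ∀ j, DLD (Wᴴ * Xhat j * W) (ddiag (Wᴴ * Xhat j * W)) =
      ∑ m, Real.log (u m j).re - Real.log (‖W.det‖ ^ 2) - Real.log (Xhat j).det.re := fun j => by
    rw [DLD_ddiag_of_posDef (hΩ j), det_conjTranspose_mul_mul, Complex.re_ofReal_mul,
      Real.log_mul hnormW.ne' (Complex.pos_iff.mp (hXhat j).det_pos).1.ne']
    simp only [hΩ_diag]
    ring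
  have hDIS : ∀ m j, DIS (u m j).re (σ m j ^ 2) =
      (u m j).re / σ m j ^ 2 - Real.log (u m j).re + Real.log (σ m j ^ 2) - 1 := fun m j =>
    DIS_eq_sub_log (hu_pos m j).1.ne' (pow_pos (hσ m j) 2).ne'
  simp only [hDLD, hDIS, Finset.sum_add_distrib, Finset.sum_sub_distrib, Finset.sum_const,
    Finset.card_univ, Fintype.card_fin, nsmul_eq_mul]
  rw [Finset.sum_comm (f := fun j m => Real.log (u m j).re)]
  ring

theorem stmt_15 (M J : ℕ) (hM : 0 < M) (hJ : 0 < J)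
    (W : Matrix (Fin M) (Fin M) ℂ) (hW : IsUnit W)
    (Xhat : Fin J → Matrix (Fin M) (Fin M) ℂ) (hXhat : ∀ j, (Xhat j).PosDef)
    (σ : Fin M → Fin J → ℝ) (hσ : ∀ m j, 0 < σ m j)
    (u : Fin M → Fin J → ℂ)
    (hu : ∀ m j, u m j =
      star (fun k => W k m) ⬝ᵥ (Xhat j).mulVec (fun k => W k m)) :
    (∀ m j, (u m j).im = 0 ∧ 0 < (u m j).re) ∧
    -(J : ℝ) * Real.log (‖W.det‖ ^ 2)
        + (∑ m, ∑ j, (u m j).re / (σ m j) ^ 2)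
        + (∑ m, ∑ j, Real.log ((σ m j) ^ 2)) =
      (∑ j, DLD (Wᴴ * Xhat j * W) (ddiag (Wᴴ * Xhat j * W)))
        + (∑ m, ∑ j, DIS ((u m j).re) ((σ m j) ^ 2))
        + (∑ j, Real.log ((Xhat j).det.re)) + M * J :=
  stmt_15_general M J W hW Xhat hXhat σ hσ u hu
end

section
/- Let M, N be positive integers, let x ∈ ℂ^M, let h_1, …, h_N > 0 be reals, let R_1, …, R_N ∈ ℂ^{M×M} and Π ∈ ℂ^{M×M} be Hermitian positive definite, and let Γ_1, …, Γ_N ∈ ℂ^{M×M} satisfy Σ_{n=1}^N Γ_n = I. Set X := Σ_{n=1}^N h_n R_n. Then the following majorization inequality holds (all quadratic forms and traces appearing are real): ln det X + xᴴ X⁻¹ x ≤ ln det Π + Σ_{n=1}^N h_n · Re tr(R_n Π⁻¹) − M + xᴴ (Σ_{n=1}^N h_n⁻¹ Γ_nᴴ R_n⁻¹ Γ_n) x. -/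
/-
Both terms are majorized separately. For the log-determinant, factor `Π⁻¹ = BᴴB` and put
`A = B X Bᴴ`: then `log det X = log det Π + log det A` and `tr A = tr (X Π⁻¹)`, so the bound is
`log det A ≤ tr A - M`, i.e. `log λ ≤ λ - 1` summed over the eigenvalues of `A`.
For the quadratic form, each block matrix `[[Aₙ, Γₙ], [Γₙᴴ, Γₙᴴ Aₙ⁻¹ Γₙ]]` with `Aₙ = hₙ Rₙ` is
positive semidefinite (its Schur complement vanishes). Since `∑ Γₙ = I`, their sum is
`[[X, I], [I, ∑ Γₙᴴ Aₙ⁻¹ Γₙ]]`, whose Schur complement gives `X⁻¹ ≤ ∑ Γₙᴴ Aₙ⁻¹ Γₙ`.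
-/

open Matrix ComplexOrder
open scoped MatrixOrder

namespace Matrix.PosDef

variable {𝕜 n : Type*} [RCLike 𝕜] [Fintype n] [DecidableEq n]

theorem det_eq_ofReal_re {A : Matrix n n 𝕜} (hA : A.PosDef) :
    A.det = (RCLike.re A.det : 𝕜) := by
  rw [hA.1.det_eq_prod_eigenvalues, ← RCLike.ofReal_prod, RCLike.ofReal_re]

theorem re_det_pos {A : Matrix n n 𝕜} (hA : A.PosDef) : 0 < RCLike.re A.det :=
  (RCLike.pos_iff.mp hA.det_pos).1

theorem log_re_det_le_re_trace_sub_card {A : Matrix n n 𝕜} (hA : A.PosDef) :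
    Real.log (RCLike.re A.det) ≤ RCLike.re A.trace - Fintype.card n := by
  have hev := hA.eigenvalues_pos
  rw [hA.1.det_eq_prod_eigenvalues, hA.1.trace_eq_sum_eigenvalues, ← RCLike.ofReal_prod,
    ← RCLike.ofReal_sum, RCLike.ofReal_re, RCLike.ofReal_re,
    Real.log_prod fun i _ => (hev i).ne']
  calc ∑ i, Real.log (hA.1.eigenvalues i) ≤ ∑ i, (hA.1.eigenvalues i - 1) :=
        Finset.sum_le_sum fun i _ => Real.log_le_sub_one_of_pos (hev i)
    _ = _ := by simp [Finset.sum_sub_distrib]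

theorem log_re_det_le_log_re_det_add_re_trace_mul_inv {X P : Matrix n n 𝕜} (hX : X.PosDef)
    (hP : P.PosDef) :
    Real.log (RCLike.re X.det) ≤
      Real.log (RCLike.re P.det) + RCLike.re (X * P⁻¹).trace - Fintype.card n := by
  obtain ⟨B, hB⟩ := CStarAlgebra.nonneg_iff_eq_star_mul_self.mp hP.inv.posSemidef.nonneg
  rw [star_eq_conjTranspose] at hB
  have hBunit : IsUnit B := by
    have := hP.inv.isUnit
    rw [hB, isUnit_iff_isUnit_det, det_mul] at this
    exact (isUnit_iff_isUnit_det B).mpr (isUnit_of_mul_isUnit_right this)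
  have hA : (B * X * Bᴴ).PosDef :=
    hX.mul_mul_conjTranspose_same (vecMul_injective_of_isUnit hBunit)
  have htr : (B * X * Bᴴ).trace = (X * P⁻¹).trace := by
    rw [hB, trace_mul_comm X, trace_mul_cycle]
  have hdet : X.det = (B * X * Bᴴ).det * P.det := by
    have : Bᴴ.det * B.det * P.det = 1 := by
      rw [← det_mul, ← hB, ← det_mul,
        nonsing_inv_mul _ ((isUnit_iff_isUnit_det P).mp hP.isUnit), det_one]
    rw [det_mul, det_mul]
    linear_combination -X.det * this
  have hre : RCLike.re X.det = RCLike.re (B * X * Bᴴ).det * RCLike.re P.det := by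
    rw [hdet, hA.det_eq_ofReal_re, hP.det_eq_ofReal_re]
    simp only [← RCLike.ofReal_mul, RCLike.ofReal_re]
  have := hA.log_re_det_le_re_trace_sub_card
  rw [hre, Real.log_mul hA.re_det_pos.ne' hP.re_det_pos.ne', ← htr]
  linarith

end Matrix.PosDef

namespace Matrix

theorem fromBlocks_sum {ι l m n o α : Type*} [AddCommMonoid α] (s : Finset ι)
    (A : ι → Matrix n l α) (B : ι → Matrix n m α) (C : ι → Matrix o l α)
    (D : ι → Matrix o m α) :
    ∑ i ∈ s, fromBlocks (A i) (B i) (C i) (D i) =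
      fromBlocks (∑ i ∈ s, A i) (∑ i ∈ s, B i) (∑ i ∈ s, C i) (∑ i ∈ s, D i) := by
  classical
  induction s using Finset.induction_on with
  | empty => simp [fromBlocks_zero]
  | insert i s hi ih => simp [Finset.sum_insert hi, ih, fromBlocks_add]

variable {𝕜 n : Type*} [RCLike 𝕜] [Fintype n] [DecidableEq n]

theorem PosDef.posSemidef_fromBlocks_conjTranspose_mul_inv_mul {A : Matrix n n 𝕜}
    (hA : A.PosDef) (B : Matrix n n 𝕜) : (fromBlocks A B Bᴴ (Bᴴ * A⁻¹ * B)).PosSemidef := by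
  have := hA.isUnit.invertible
  rw [hA.fromBlocks₁₁, sub_self]
  exact .zero

theorem inv_sum_le_sum_conjTranspose_mul_inv_mul {ι : Type*} [Fintype ι] [Nonempty ι]
    {A B : ι → Matrix n n 𝕜} (hA : ∀ i, (A i).PosDef) (hB : ∑ i, B i = 1) :
    (∑ i, A i)⁻¹ ≤ ∑ i, (B i)ᴴ * (A i)⁻¹ * B i := by
  have hsum : (∑ i, A i).PosDef := posDef_sum Finset.univ_nonempty fun i _ => hA i
  have := hsum.isUnit.invertible
  have hblocks := posSemidef_sum Finset.univ fun i _ =>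
    (hA i).posSemidef_fromBlocks_conjTranspose_mul_inv_mul (B i)
  rw [fromBlocks_sum, ← conjTranspose_sum, hB] at hblocks
  simpa [le_iff] using (hsum.fromBlocks₁₁ 1 _).mp hblocks

end Matrix

theorem stmt_16_general (M N : ℕ) (hN : 0 < N)
    (x : Fin M → ℂ)
    (h : Fin N → ℝ) (hh : ∀ n, 0 < h n)
    (R : Fin N → Matrix (Fin M) (Fin M) ℂ) (hR : ∀ n, (R n).PosDef)
    (Pi0 : Matrix (Fin M) (Fin M) ℂ) (hPi0 : Pi0.PosDef)
    (Γ : Fin N → Matrix (Fin M) (Fin M) ℂ) (hΓ : ∑ n, Γ n = 1)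
    (X : Matrix (Fin M) (Fin M) ℂ) (hX : X = ∑ n, (h n : ℂ) • R n) :
    Real.log X.det.re + (star x ⬝ᵥ X⁻¹.mulVec x).re ≤
      Real.log Pi0.det.re + (∑ n, h n * ((R n * Pi0⁻¹).trace).re) - M +
        (star x ⬝ᵥ
          (∑ n, ((h n : ℂ))⁻¹ • ((Γ n)ᴴ * (R n)⁻¹ * Γ n)).mulVec x).re := by
  have : Nonempty (Fin N) := Fin.pos_iff_nonempty.mp hN
  have hhR : ∀ n, ((h n : ℂ) • R n).PosDef := fun n =>
    (hR n).smul (Complex.zero_lt_real.mpr (hh n))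
  have hXpd : X.PosDef := hX ▸ posDef_sum Finset.univ_nonempty fun n _ => hhR n
  have hlogdet := hXpd.log_re_det_le_log_re_det_add_re_trace_mul_inv hPi0
  have htrace : (X * Pi0⁻¹).trace.re = ∑ n, h n * ((R n * Pi0⁻¹).trace).re := by
    simp [hX, Finset.sum_mul, trace_sum, trace_smul]
  have hinv : ∀ n, (Γ n)ᴴ * ((h n : ℂ) • R n)⁻¹ * Γ n =
      ((h n : ℂ))⁻¹ • ((Γ n)ᴴ * (R n)⁻¹ * Γ n) := by
    intro n
    rw [inv_eq_left_inv (B := ((h n : ℂ))⁻¹ • (R n)⁻¹)]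
    · rw [mul_smul_comm, smul_mul_assoc]
    · rw [smul_mul_smul_comm, inv_mul_cancel₀ (by exact_mod_cast (hh n).ne'),
        nonsing_inv_mul _ ((isUnit_iff_isUnit_det _).mp (hR n).isUnit), one_smul]
  have hquad :=
    (le_iff.mp (inv_sum_le_sum_conjTranspose_mul_inv_mul hhR hΓ)).re_dotProduct_nonneg x
  simp only [← hX, hinv, sub_mulVec, dotProduct_sub, map_sub, RCLike.re_to_complex] at hquad
  simp only [RCLike.re_to_complex, Fintype.card_fin, htrace] at hlogdet
  linarith

theorem stmt_16 (M N : ℕ) (hM : 0 < M) (hN : 0 < N)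
    (x : Fin M → ℂ)
    (h : Fin N → ℝ) (hh : ∀ n, 0 < h n)
    (R : Fin N → Matrix (Fin M) (Fin M) ℂ) (hR : ∀ n, (R n).PosDef)
    (Pi0 : Matrix (Fin M) (Fin M) ℂ) (hPi0 : Pi0.PosDef)
    (Γ : Fin N → Matrix (Fin M) (Fin M) ℂ) (hΓ : ∑ n, Γ n = 1)
    (X : Matrix (Fin M) (Fin M) ℂ) (hX : X = ∑ n, (h n : ℂ) • R n) :
    Real.log X.det.re + (star x ⬝ᵥ X⁻¹.mulVec x).re ≤
      Real.log Pi0.det.re + (∑ n, h n * ((R n * Pi0⁻¹).trace).re) - M +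
        (star x ⬝ᵥ
          (∑ n, ((h n : ℂ))⁻¹ • ((Γ n)ᴴ * (R n)⁻¹ * Γ n)).mulVec x).re :=
  stmt_16_general M N hN x h hh R hR Pi0 hPi0 Γ hΓ X hX
end

section
/- Let M be a positive integer, let Q ∈ ℂ^{M×M} be Hermitian positive definite, let W ∈ ℂ^{M×M} be invertible, and fix m ∈ {1, …, M}. Then v := (Wᴴ Q)⁻¹ e_m is nonzero, vᴴ Q v is a positive real number, and, defining w := v / √(vᴴ Q v) and letting W′ be the matrix obtained from W by replacing its m-th column by w, the iterative-projection update satisfies the stationary condition (W′)ᴴ Q w = e_m. -/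
open Matrix ComplexOrder

theorem stmt_17 (M : ℕ) (hM : 0 < M)
    (Q : Matrix (Fin M) (Fin M) ℂ) (hQ : Q.PosDef)
    (W : Matrix (Fin M) (Fin M) ℂ) (hW : IsUnit W) (m : Fin M)
    (v : Fin M → ℂ) (hv : v = ((Wᴴ * Q)⁻¹).mulVec (Pi.single m 1))
    (w : Fin M → ℂ)
    (hw : w = ((Real.sqrt ((star v ⬝ᵥ Q.mulVec v).re) : ℂ))⁻¹ • v)
    (W' : Matrix (Fin M) (Fin M) ℂ) (hW' : W' = W.updateCol m w) :
    v ≠ 0 ∧ (star v ⬝ᵥ Q.mulVec v).im = 0 ∧ 0 < (star v ⬝ᵥ Q.mulVec v).re ∧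
      (W'ᴴ * Q).mulVec w = Pi.single m 1 := by
  have hWH : IsUnit Wᴴ := (Matrix.isUnit_conjTranspose W).mpr hW
  have hU : IsUnit (Wᴴ * Q) := hWH.mul hQ.isUnit
  have hUdet : IsUnit (Wᴴ * Q).det := (Matrix.isUnit_iff_isUnit_det _).mp hU
  have key : (Wᴴ * Q).mulVec v = Pi.single m 1 := by
    rw [hv, Matrix.mulVec_mulVec, Matrix.mul_nonsing_inv _ hUdet, Matrix.one_mulVec]
  have hvne : v ≠ 0 := by
    intro h
    have h2 := congrFun key m
    rw [h, Matrix.mulVec_zero] at h2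
    simp at h2
  have hpos : 0 < star v ⬝ᵥ Q.mulVec v := hQ.dotProduct_mulVec_pos hvne
  obtain ⟨hre, him⟩ := Complex.lt_def.mp hpos
  simp only [Complex.zero_re, Complex.zero_im] at hre him
  refine ⟨hvne, him.symm, hre, ?_⟩
  set r : ℝ := Real.sqrt ((star v ⬝ᵥ Q.mulVec v).re) with hr
  have hr0 : 0 < r := Real.sqrt_pos.mpr hre
  have hrq : (star v ⬝ᵥ Q.mulVec v) = ((r : ℂ))^2 := by
    have h3 : (star v ⬝ᵥ Q.mulVec v) = ((star v ⬝ᵥ Q.mulVec v).re : ℂ) := by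
      apply Complex.ext <;> simp [him.symm]
    rw [h3]
    norm_cast
    rw [hr, Real.sq_sqrt hre.le]
  have hrne : ((r:ℂ)) ≠ 0 := by exact_mod_cast hr0.ne'
  have hstar : star ((r:ℂ))⁻¹ = ((r:ℂ))⁻¹ := by
    rw [star_inv₀]; simp [Complex.star_def, Complex.conj_ofReal]
  set x : Fin M → ℂ := Q.mulVec v with hx
  funext k
  rw [hW', ← Matrix.mulVec_mulVec]
  have hQw : Q.mulVec w = ((r:ℂ))⁻¹ • x := by rw [hw, Matrix.mulVec_smul, hx]
  rw [hQw, Matrix.mulVec_smul]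
  have entry : ((W.updateCol m w)ᴴ *ᵥ x) k = ∑ j, star (W.updateCol m w j k) * x j := by
    simp [Matrix.mulVec, dotProduct, Matrix.conjTranspose_apply]
  rw [Pi.smul_apply, entry, smul_eq_mul]
  by_cases hk : k = m
  · subst hk
    have hsum : ∑ j, star (W.updateCol k w j k) * x j
        = ((r:ℂ))⁻¹ * (star v ⬝ᵥ x) := by
      rw [dotProduct, Finset.mul_sum]
      refine Finset.sum_congr rfl fun j _ => ?_
      rw [Matrix.updateCol_apply, if_pos rfl, hw]
      simp only [Pi.smul_apply, smul_eq_mul, star_mul', hstar, Pi.star_apply]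
      ring
    rw [hsum, hrq, Pi.single_eq_same]
    field_simp
  · have hsum : ∑ j, star (W.updateCol m w j k) * x j = ((Wᴴ * Q) *ᵥ v) k := by
      rw [← Matrix.mulVec_mulVec, ← hx]
      simp only [Matrix.mulVec, dotProduct, Matrix.conjTranspose_apply]
      refine Finset.sum_congr rfl fun j _ => ?_
      rw [Matrix.updateCol_apply, if_neg hk]
    rw [hsum, key, Pi.single_eq_of_ne hk, mul_zero]
end
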